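/- There is an absolute constant c₀ > 0 with the following property. Let φ : ℝ → ℝ be a measurable odd function with 0 ≤ φ(x) ≤ 1 for x > 0, φ(x) = 1 for 0 < x ≤ 1, and φ(x) = 0 for x ≥ 2. Then for every z ∈ ℍ with 0 < |z| ≤ 1/2: |G_φ(z)| ≥ (2/π)·log(1/|z|) − c₀, where G_φ(z) = (1/(πi))∫_ℝ φ(t)/(z − t) dt. In particular, there is a fixed δ with 0 < δ ≤ 1/2 such that |G_φ(z)| ≥ (1/π)·log(1/|z|) for all z ∈ ℍ with 0 < |z| ≤ δ. -/

import Mathlib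

open MeasureTheory Real Complex Filter
open scoped Topology

noncomputable section

/-- `G_ψ(z) = (1/(πi)) ∫_ℝ ψ(t)/(z - t) dt`, the analytic extension `ψ + iHψ`
of an integrable `ψ : ℝ → ℝ` to the upper half-plane. -/
noncomputable def UHG (ψ : ℝ → ℝ) (z : ℂ) : ℂ :=
  ((Real.pi : ℂ) * Complex.I)⁻¹ • ∫ t : ℝ, ((ψ t : ℂ) / (z - (t : ℂ)))

/-- The hypotheses on the bump function `φ`: measurable, odd, `0 ≤ φ ≤ 1` on `(0,∞)`,
`φ = 1` on `(0,1]` and `φ = 0` on `[2,∞)`. -/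
def IsPhi (φ : ℝ → ℝ) : Prop :=
  Measurable φ ∧ (∀ x : ℝ, φ (-x) = - φ x) ∧ (∀ x : ℝ, 0 < x → 0 ≤ φ x ∧ φ x ≤ 1) ∧
    (∀ x : ℝ, 0 < x → x ≤ 1 → φ x = 1) ∧ (∀ x : ℝ, 2 ≤ x → φ x = 0)

/-!
On `(-1, 1]` the function `φ` is the sign function, whose Cauchy integral is explicit:
`∫_{-1}^{1} sgn t / (z - t) dt = 2 log z - log (z - 1) - log (z + 1)`, with real part
`2 log |z| + O(1)` for `|z| ≤ 1/2`. The rest of `φ` lives on `1 ≤ |t| ≤ 2`, where the kernel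
`1 / (z - t)` is bounded by `2`, so it contributes `O(1)`.
-/

open Set

namespace Complex

variable {z : ℂ}

lemma abs_im_le_norm_sub_ofReal (z : ℂ) (t : ℝ) : |z.im| ≤ ‖z - t‖ := by
  simpa using abs_im_le_norm (z - t)

lemma sub_ofReal_ne_zero (hz : z.im ≠ 0) (t : ℝ) : z - t ≠ 0 := by
  intro h
  simpa [h] using abs_im_le_norm_sub_ofReal z t |>.trans_lt' (abs_pos.2 hz)

lemma hasDerivAt_neg_log_sub_ofReal (hz : z.im ≠ 0) (t : ℝ) :
    HasDerivAt (fun s : ℝ => -log (z - s)) (z - t)⁻¹ t := by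
  have hslit : z - t ∈ slitPlane := by simp [mem_slitPlane_iff, hz]
  convert (((hasDerivAt_id (t : ℂ)).const_sub z).clog hslit).neg.comp_ofReal using 1
  · rfl
  · rw [neg_div, neg_neg, one_div, id]

lemma integral_inv_sub_ofReal (hz : z.im ≠ 0) (a b : ℝ) :
    ∫ t in a..b, (z - t)⁻¹ = log (z - a) - log (z - b) := by
  have hcont : Continuous fun t : ℝ => (z - t)⁻¹ :=
    (continuous_const.sub continuous_ofReal).inv₀ (sub_ofReal_ne_zero hz)
  rw [intervalIntegral.integral_eq_sub_of_hasDerivAt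
    (fun t _ => hasDerivAt_neg_log_sub_ofReal hz t) (hcont.intervalIntegrable a b)]
  ring

lemma integral_div_sub_ofReal_of_eqOn_Ioo {ψ : ℝ → ℝ} {a b c : ℝ} (hz : z.im ≠ 0) (hab : a ≤ b)
    (hψ : EqOn ψ (fun _ => c) (Ioo a b)) :
    ∫ t in a..b, (ψ t : ℂ) / (z - t) = c * (log (z - a) - log (z - b)) := by
  rw [intervalIntegral.integral_congr_Ioo_of_le hab (g := fun t => c * (z - t)⁻¹)
    (fun t ht => by simp [hψ ht, div_eq_mul_inv]), intervalIntegral.integral_const_mul,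
    integral_inv_sub_ofReal hz]

lemma integrable_div_sub_ofReal {ψ : ℝ → ℝ} (hψ : Integrable ψ) (hz : z.im ≠ 0) :
    Integrable fun t : ℝ => (ψ t : ℂ) / (z - t) := by
  simp only [div_eq_mul_inv]
  refine hψ.ofReal.mul_bdd (c := |z.im|⁻¹)
    ((continuous_const.sub continuous_ofReal).inv₀ (sub_ofReal_ne_zero hz)).aestronglyMeasurable
    (Eventually.of_forall fun t => ?_)
  rw [norm_inv]
  exact inv_anti₀ (abs_pos.2 hz) (abs_im_le_norm_sub_ofReal z t)

lemma half_le_norm_sub_ofReal (hz : ‖z‖ ≤ 1 / 2) {t : ℝ} (ht : 1 ≤ |t|) : 1 / 2 ≤ ‖z - t‖ := by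
  have := norm_sub_norm_le (t : ℂ) z
  rw [norm_sub_rev, norm_real, Real.norm_eq_abs] at this
  linarith

lemma le_norm_two_mul_log_sub_log_sub_one_sub_log_add_one (hz : ‖z‖ ≤ 1 / 2) :
    2 * Real.log (1 / ‖z‖) - 2 * Real.log 2 ≤ ‖2 * log z - log (z - 1) - log (z + 1)‖ := by
  have hlog_half : ∀ t : ℝ, 1 ≤ |t| → -Real.log 2 ≤ Real.log ‖z - t‖ := fun t ht => by
    rw [← Real.log_inv, ← one_div]
    exact Real.log_le_log (by norm_num) (half_le_norm_sub_ofReal hz ht)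
  have h₁ := hlog_half 1 (by norm_num)
  have h₂ := hlog_half (-1) (by norm_num)
  have hre := (abs_le.1 (abs_re_le_norm (2 * log z - log (z - 1) - log (z + 1)))).1
  simp only [ofReal_one, ofReal_neg, sub_neg_eq_add] at h₁ h₂
  simp only [sub_re, mul_re, log_re, re_ofNat, im_ofNat, zero_mul, sub_zero] at hre
  rw [one_div, Real.log_inv]
  linarith

end Complex

lemma norm_UHG (ψ : ℝ → ℝ) (z : ℂ) : ‖UHG ψ z‖ = ‖∫ t : ℝ, (ψ t : ℂ) / (z - t)‖ / π := by
  rw [UHG, norm_smul, norm_inv, norm_mul, norm_I, norm_real, Real.norm_of_nonneg pi_pos.le,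
    mul_one, inv_mul_eq_div]

namespace IsPhi

variable {φ : ℝ → ℝ} {z : ℂ}

lemma map_zero (hφ : IsPhi φ) : φ 0 = 0 := by
  have := hφ.2.1 0
  rw [neg_zero] at this
  linarith

lemma abs_le_one (hφ : IsPhi φ) (t : ℝ) : |φ t| ≤ 1 := by
  have hpos : ∀ s, 0 < s → |φ s| ≤ 1 := fun s hs =>
    abs_le.2 ⟨by linarith [(hφ.2.2.1 s hs).1], (hφ.2.2.1 s hs).2⟩
  rcases lt_trichotomy t 0 with ht | rfl | ht
  · simpa [hφ.2.1] using hpos (-t) (neg_pos.2 ht)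
  · simp [hφ.map_zero]
  · exact hpos t ht

lemma eq_zero_of_two_le_abs (hφ : IsPhi φ) {t : ℝ} (ht : 2 ≤ |t|) : φ t = 0 := by
  rcases le_abs'.1 ht with ht | ht
  · have := hφ.2.2.2.2 (-t) (by linarith)
    rw [hφ.2.1] at this
    linarith
  · exact hφ.2.2.2.2 t ht

lemma eq_neg_one_of_mem_Ioo (hφ : IsPhi φ) {t : ℝ} (ht : t ∈ Ioo (-1) 0) : φ t = -1 := by
  have := hφ.2.2.2.1 (-t) (by linarith [ht.2]) (by linarith [ht.1])
  rw [hφ.2.1] at this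
  linarith

lemma integrable (hφ : IsPhi φ) : Integrable φ :=
  (Measure.integrableOn_of_bounded (s := Icc (-2) 2) (M := 1) (by simp)
    hφ.1.aestronglyMeasurable (Eventually.of_forall hφ.abs_le_one)).integrable_of_forall_notMem_eq_zero
    fun t ht => hφ.eq_zero_of_two_le_abs (not_le.1 (by rwa [mem_Icc, ← abs_le] at ht)).le

lemma integral_Ioc_div_sub (hφ : IsPhi φ) (hz : z.im ≠ 0) :
    ∫ t in Ioc (-1) 1, (φ t : ℂ) / (z - t) = 2 * log z - log (z - 1) - log (z + 1) := by
  have hint : ∀ a b : ℝ, IntervalIntegrable (fun t : ℝ => (φ t : ℂ) / (z - t)) volume a b :=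
    fun _ _ => (integrable_div_sub_ofReal hφ.integrable hz).intervalIntegrable
  rw [← intervalIntegral.integral_of_le (by norm_num),
    ← intervalIntegral.integral_add_adjacent_intervals (b := 0) (hint _ _) (hint _ _),
    integral_div_sub_ofReal_of_eqOn_Ioo hz (by norm_num) (c := -1)
      fun t ht => hφ.eq_neg_one_of_mem_Ioo ht,
    integral_div_sub_ofReal_of_eqOn_Ioo hz (by norm_num) (c := 1)
      fun t ht => hφ.2.2.2.1 t ht.1 ht.2.le]
  simp only [ofReal_neg, ofReal_one, ofReal_zero, sub_neg_eq_add, sub_zero]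
  ring

lemma norm_setIntegral_compl_Ioc_div_sub_le (hφ : IsPhi φ) (hz : ‖z‖ ≤ 1 / 2) :
    ‖∫ t in (Ioc (-1) 1)ᶜ, (φ t : ℂ) / (z - t)‖ ≤ 8 := by
  have hsupp : ∫ t in (Ioc (-1) 1)ᶜ, (φ t : ℂ) / (z - t) =
      ∫ t in (Ioc (-1) 1)ᶜ ∩ Icc (-2) 2, (φ t : ℂ) / (z - t) := by
    refine setIntegral_eq_of_subset_of_forall_sdiff_eq_zero measurableSet_Ioc.compl
      inter_subset_left fun t ht => ?_
    have h2 : 2 ≤ |t| := (not_le.1 fun h => ht.2 ⟨ht.1, abs_le.1 h⟩).le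
    simp [hφ.eq_zero_of_two_le_abs h2]
  have hbound : ∀ t ∈ (Ioc (-1) 1)ᶜ ∩ Icc (-2) 2, ‖(φ t : ℂ) / (z - t)‖ ≤ 2 := by
    intro t ht
    have h1 : 1 ≤ |t| := by
      rw [mem_inter_iff, mem_compl_iff, mem_Ioc, not_and_or, not_lt, not_le] at ht
      exact le_abs'.2 (ht.1.imp id le_of_lt)
    rw [norm_div, norm_real, Real.norm_eq_abs]
    calc |φ t| / ‖z - t‖ ≤ 1 / (1 / 2) :=
          div_le_div₀ zero_le_one (hφ.abs_le_one t) one_half_pos (half_le_norm_sub_ofReal hz h1)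
      _ = 2 := by norm_num
  have hvol : volume.real ((Ioc (-1 : ℝ) 1)ᶜ ∩ Icc (-2) 2) ≤ 4 := by
    refine (measureReal_mono inter_subset_right measure_Icc_lt_top.ne).trans ?_
    rw [Real.volume_real_Icc]
    norm_num
  rw [hsupp]
  calc _ ≤ 2 * volume.real ((Ioc (-1 : ℝ) 1)ᶜ ∩ Icc (-2) 2) :=
        norm_setIntegral_le_of_norm_le_const
          (measure_inter_lt_top_of_right_ne_top measure_Icc_lt_top.ne) hbound
    _ ≤ 8 := by linarith

lemma norm_UHG_ge (hφ : IsPhi φ) (hz : z.im ≠ 0) (hz2 : ‖z‖ ≤ 1 / 2) :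
    2 / π * Real.log (1 / ‖z‖) - (2 * Real.log 2 + 8) / π ≤ ‖UHG φ z‖ := by
  have hsplit := integral_add_compl (measurableSet_Ioc (a := -1) (b := 1))
    (integrable_div_sub_ofReal hφ.integrable hz)
  rw [hφ.integral_Ioc_div_sub hz] at hsplit
  have hint : ‖2 * log z - log (z - 1) - log (z + 1)‖ - 8 ≤ ‖∫ t : ℝ, (φ t : ℂ) / (z - t)‖ := by
    rw [← hsplit]
    linarith [norm_sub_le_norm_add (2 * log z - log (z - 1) - log (z + 1))
      (∫ t in (Ioc (-1) 1)ᶜ, (φ t : ℂ) / (z - t)), hφ.norm_setIntegral_compl_Ioc_div_sub_le hz2]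
  rw [norm_UHG]
  calc _ = (2 * Real.log (1 / ‖z‖) - 2 * Real.log 2 - 8) / π := by ring
    _ ≤ _ := div_le_div_of_nonneg_right
        (by linarith [le_norm_two_mul_log_sub_log_sub_one_sub_log_add_one hz2]) pi_pos.le

end IsPhi

/-- The logarithmic lower estimate near `0`: `|(φ + iHφ)(z)| ≥ (2/π)log(1/|z|) - c₀`
for `z ∈ ℍ` with `0 < |z| ≤ 1/2`, and in particular `|(φ + iHφ)(z)| ≥ (1/π)log(1/|z|)`
for `0 < |z| ≤ δ` for some fixed `δ ∈ (0, 1/2]`. -/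
theorem stmt_11 : ∃ c₀ > (0:ℝ),
    (∀ φ : ℝ → ℝ, IsPhi φ → ∀ z : ℂ, 0 < z.im → 0 < ‖z‖ → ‖z‖ ≤ 1 / 2 →
      2 / Real.pi * Real.log (1 / ‖z‖) - c₀ ≤ ‖UHG φ z‖) ∧
    ∃ δ : ℝ, 0 < δ ∧ δ ≤ 1 / 2 ∧
      ∀ φ : ℝ → ℝ, IsPhi φ → ∀ z : ℂ, 0 < z.im → 0 < ‖z‖ → ‖z‖ ≤ δ →
        1 / Real.pi * Real.log (1 / ‖z‖) ≤ ‖UHG φ z‖ := by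
  -- `K = π c₀`, and `δ = e^{-K}` is where `log (1 / ‖z‖) ≥ K` absorbs the constant.
  set K := 2 * Real.log 2 + 8
  have hlog2 := Real.log_pos one_lt_two
  have hδ : Real.exp (-K) ≤ 1 / 2 := calc
    Real.exp (-K) ≤ Real.exp (-Real.log 2) := Real.exp_le_exp.2 (by linarith)
    _ = 1 / 2 := by rw [Real.exp_neg, Real.exp_log two_pos, one_div]
  refine ⟨K / π, by positivity, fun φ hφ z hz _ hz2 => hφ.norm_UHG_ge hz.ne' hz2,
    Real.exp (-K), Real.exp_pos _, hδ, fun φ hφ z hz hz0 hzδ => ?_⟩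
  have hK : K ≤ Real.log (1 / ‖z‖) := by
    rw [one_div, Real.log_inv, le_neg]
    simpa using Real.log_le_log hz0 hzδ
  have hdiff : 0 ≤ (Real.log (1 / ‖z‖) - K) / π := div_nonneg (by linarith) pi_pos.le
  calc 1 / π * Real.log (1 / ‖z‖)
      = 2 / π * Real.log (1 / ‖z‖) - K / π - (Real.log (1 / ‖z‖) - K) / π := by ring
    _ ≤ ‖UHG φ z‖ := by linarith [hφ.norm_UHG_ge hz.ne' (hzδ.trans hδ)]
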